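/- arXiv:2104.13855 — 3 statements merged into one kernel-verified Lean document; each statement's English description precedes it below -/
import Mathlib

section
/- Let ν be a Lévy measure with I := ∫_ℝ x² ν(dx) < ∞ and let κ ≥ 1. Then ∫_1^∞ t^{−3/2} ∫_0^{κ√t} x² ν̄(x) dx dt ≤ 2 ∫_0^κ x² ν̄(x) dx + κ I < ∞, where ν̄(x) = ν(ℝ∖(−x,x)). -/
open MeasureTheory ProbabilityTheory Real Filter Set
open scoped ENNReal

noncomputable section

/-- The standard normal cumulative distribution function. -/
def stdGaussianCDF (x : ℝ) : ℝ := ((gaussianReal 0 1) (Set.Iic x)).toReal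

/-- Two-sided tail `ν(ℝ ∖ (−x, x))` of a measure on `ℝ`. -/
def tailNu (ν : Measure ℝ) (x : ℝ) : ℝ := (ν {y : ℝ | x ≤ |y|}).toReal

/-- `ν` is a Lévy measure. -/
def IsLevyMeasure (ν : Measure ℝ) : Prop :=
  ν {0} = 0 ∧ ∫⁻ x, ENNReal.ofReal (min 1 (x ^ 2)) ∂ν < ⊤

/-- A (càdlàg) Lévy process. -/
structure IsLevyProcess {Ω : Type*} [MeasurableSpace Ω] (P : Measure Ω)
    (X : ℝ → Ω → ℝ) : Prop where
  isProb : IsProbabilityMeasure P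
  meas : ∀ t, Measurable (X t)
  init : ∀ᵐ ω ∂P, X 0 ω = 0
  stationary : ∀ s t : ℝ, 0 ≤ s → 0 ≤ t →
    P.map (fun ω => X (s + t) ω - X s ω) = P.map (X t)
  indep : ∀ (n : ℕ) (t : ℕ → ℝ), Monotone t → (∀ i, 0 ≤ t i) →
    iIndepFun
      (fun i : Fin n => fun ω => X (t (i + 1)) ω - X (t i) ω) P
  rightCont : ∀ ω, ∀ t : ℝ, 0 ≤ t →
    Filter.Tendsto (fun s => X s ω) (nhdsWithin t (Set.Ioi t)) (nhds (X t ω))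
  leftLimits : ∀ ω, ∀ t : ℝ, 0 < t →
    ∃ l, Filter.Tendsto (fun s => X s ω) (nhdsWithin t (Set.Iio t)) (nhds l)

/-- The Lévy–Khintchine exponent for the triplet `(S2, ν, β)` with cutoff `1_{|x|<1}`. -/
def levyExponent (S2 β : ℝ) (ν : Measure ℝ) (u : ℝ) : ℂ :=
  Complex.I * (β : ℂ) * (u : ℂ) - (S2 : ℂ) * (u : ℂ) ^ 2 / 2 +
    ∫ x : ℝ, (Complex.exp (Complex.I * (u : ℂ) * (x : ℂ)) - 1 -
      Complex.I * (u : ℂ) * (x : ℂ) *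
        ((Set.indicator (Set.Ioo (-1 : ℝ) 1) (fun _ => (1 : ℝ)) x : ℝ) : ℂ)) ∂ν

/-- The Lévy process `X` has generating triplet `(S2, ν, β)`. -/
structure HasLevyTriplet {Ω : Type*} [MeasurableSpace Ω] (P : Measure Ω)
    (X : ℝ → Ω → ℝ) (S2 : ℝ) (ν : Measure ℝ) (β : ℝ) : Prop where
  sig_nonneg : 0 ≤ S2
  levy : IsLevyMeasure ν
  charFun : ∀ t : ℝ, 0 ≤ t → ∀ u : ℝ,
    (∫ ω, Complex.exp (Complex.I * (u : ℂ) * (X t ω : ℂ)) ∂P)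
      = Complex.exp ((t : ℂ) * levyExponent S2 β ν u)

/-- The jump of the path `s ↦ X s ω` at time `s`. -/
def jumpAt {Ω : Type*} (X : ℝ → Ω → ℝ) (ω : Ω) (s : ℝ) : ℝ :=
  X s ω - Function.leftLim (fun u => X u ω) s


set_option maxHeartbeats 2000000 in
/-- `∫_1^∞ t^{−3/2} ∫_0^{κ√t} x² ν̄(x) dx dt ≤ 2 ∫_0^κ x² ν̄(x) dx + κ ∫ x² ν(dx)`,
in particular the left-hand side is finite. -/
theorem stmt7 (ν : Measure ℝ) (κ : ℝ) (h : IsLevyMeasure ν)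
    (hint : Integrable (fun x => x ^ 2) ν) (hκ : 1 ≤ κ) :
    ∫⁻ t in Set.Ioi (1 : ℝ), ENNReal.ofReal
        (t ^ (-(3 : ℝ) / 2) * ∫ x in Set.Ioo 0 (κ * Real.sqrt t), x ^ 2 * tailNu ν x)
      ≤ ENNReal.ofReal
        (2 * (∫ x in Set.Ioo (0 : ℝ) κ, x ^ 2 * tailNu ν x) + κ * ∫ x, x ^ 2 ∂ν) := by
  obtain ⟨hν0, -⟩ := h
  have hκ0 : (0:ℝ) < κ := lt_of_lt_of_le zero_lt_one hκ
  set T : ℝ → ℝ≥0∞ := fun x => ν {y : ℝ | x ≤ |y|} with hTdef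
  have hT_anti : Antitone T := fun a b hab => measure_mono fun y hy => le_trans hab hy
  have hT_meas : Measurable T := hT_anti.measurable
  have hsqm : Measurable fun y : ℝ => ENNReal.ofReal (y ^ 2) :=
    ENNReal.measurable_ofReal.comp (measurable_id.pow_const 2)
  have hsq : ∫⁻ y, ENNReal.ofReal (y ^ 2) ∂ν ≠ ⊤ := by
    have h1 := hint.hasFiniteIntegral
    rw [hasFiniteIntegral_iff_ofReal (ae_of_all _ fun y => sq_nonneg y)] at h1
    exact h1.ne
  have hcheb : ∀ x : ℝ, 0 < x →
      ENNReal.ofReal (x ^ 2) * T x ≤ ∫⁻ y, ENNReal.ofReal (y ^ 2) ∂ν := by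
    intro x hx
    refine le_trans ?_ (mul_meas_ge_le_lintegral₀ hsqm.aemeasurable (ENNReal.ofReal (x ^ 2)))
    refine mul_le_mul_right (measure_mono fun y hy => ?_) _
    simp only [Set.mem_setOf_eq] at hy ⊢
    refine ENNReal.ofReal_le_ofReal ?_
    calc x ^ 2 ≤ |y| ^ 2 := pow_le_pow_left₀ hx.le hy 2
      _ = y ^ 2 := sq_abs y
  have hT_fin : ∀ x : ℝ, 0 < x → T x ≠ ⊤ := by
    intro x hx hT
    have h2 := hcheb x hx
    rw [hT, ENNReal.mul_top (ENNReal.ofReal_pos.mpr (by positivity)).ne'] at h2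
    exact hsq (top_le_iff.mp h2)
  haveI hsf : SigmaFinite ν := by
    refine ⟨⟨⟨fun n => {0} ∪ {y : ℝ | ((n : ℝ) + 1)⁻¹ ≤ |y|}, fun _ => trivial, fun n => ?_, ?_⟩⟩⟩
    · refine lt_of_le_of_lt (measure_union_le _ _) ?_
      rw [hν0, zero_add]
      exact lt_top_iff_ne_top.mpr (hT_fin _ (by positivity))
    · ext y
      simp only [Set.mem_iUnion, Set.mem_union, Set.mem_singleton_iff, Set.mem_setOf_eq,
        Set.mem_univ, iff_true]
      rcases eq_or_ne y 0 with hy | hy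
      · exact ⟨0, Or.inl hy⟩
      · obtain ⟨n, hn⟩ := exists_nat_gt |y|⁻¹
        refine ⟨n, Or.inr ?_⟩
        have hy' : 0 < |y| := abs_pos.mpr hy
        rw [inv_le_comm₀ (by positivity) hy']
        exact le_trans hn.le (by linarith)
  set G : ℝ → ℝ≥0∞ := fun x => ENNReal.ofReal (x ^ 2) * T x with hGdef
  have hG_meas : Measurable G := hsqm.mul hT_meas
  have htail : ∀ x, tailNu ν x = (T x).toReal := fun x => rfl
  have hf_meas : Measurable fun x : ℝ => x ^ 2 * tailNu ν x :=
    (measurable_id.pow_const 2).mul hT_meas.ennreal_toReal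
  have hf_nonneg : ∀ x : ℝ, 0 ≤ x ^ 2 * tailNu ν x := fun x =>
    mul_nonneg (sq_nonneg x) ENNReal.toReal_nonneg
  have hbound : ∀ x : ℝ, 0 < x →
      x ^ 2 * tailNu ν x ≤ (∫⁻ y, ENNReal.ofReal (y ^ 2) ∂ν).toReal := by
    intro x hx
    have h1 : x ^ 2 * tailNu ν x = (ENNReal.ofReal (x ^ 2) * T x).toReal := by
      rw [ENNReal.toReal_mul, ENNReal.toReal_ofReal (sq_nonneg x), htail]
    rw [h1]
    exact ENNReal.toReal_mono hsq (hcheb x hx)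
  have hf_int : ∀ b : ℝ, IntegrableOn (fun x => x ^ 2 * tailNu ν x) (Set.Ioo 0 b) := by
    intro b
    have hconst : IntegrableOn (fun _ : ℝ => (∫⁻ y, ENNReal.ofReal (y ^ 2) ∂ν).toReal)
        (Set.Ioo (0:ℝ) b) volume := integrableOn_const measure_Ioo_lt_top.ne
    refine Integrable.mono' hconst
      hf_meas.aestronglyMeasurable.restrict
      (ae_restrict_of_forall_mem measurableSet_Ioo fun x hx => ?_)
    rw [Real.norm_eq_abs, abs_of_nonneg (hf_nonneg x)]
    exact hbound x hx.1
  have hconv : ∀ b : ℝ, ENNReal.ofReal (∫ x in Set.Ioo 0 b, x ^ 2 * tailNu ν x)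
      = ∫⁻ x in Set.Ioo 0 b, G x := by
    intro b
    rw [ofReal_integral_eq_lintegral_ofReal (hf_int b) (ae_of_all _ hf_nonneg)]
    refine setLIntegral_congr_fun measurableSet_Ioo (fun x hx => ?_)
    rw [ENNReal.ofReal_mul (sq_nonneg x), htail, ENNReal.ofReal_toReal (hT_fin x hx.1), hGdef]
  have hc_meas : Measurable fun t : ℝ => ENNReal.ofReal (t ^ (-(3:ℝ)/2)) :=
    ENNReal.measurable_ofReal.comp (measurable_id.pow_const _)
  have htail_int : ∀ a : ℝ, 1 ≤ a →
      ∫⁻ t in Set.Ioi a, ENNReal.ofReal (t ^ (-(3:ℝ)/2))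
        = ENNReal.ofReal (2 * a ^ (-(1:ℝ)/2)) := by
    intro a ha
    have ha0 : (0:ℝ) < a := lt_of_lt_of_le zero_lt_one ha
    rw [← ofReal_integral_eq_lintegral_ofReal (integrableOn_Ioi_rpow_of_lt (by norm_num) ha0)
      (ae_restrict_of_forall_mem measurableSet_Ioi fun t ht =>
        Real.rpow_nonneg (le_of_lt (lt_trans ha0 ht)) _)]
    rw [integral_Ioi_rpow_of_lt (by norm_num) ha0]
    congr 1
    rw [show (-(3:ℝ)/2 + 1) = -(1:ℝ)/2 by norm_num]
    ring
  -- Step A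
  have stepA : (∫⁻ t in Set.Ioi (1:ℝ), ENNReal.ofReal
        (t ^ (-(3:ℝ)/2) * ∫ x in Set.Ioo 0 (κ * Real.sqrt t), x ^ 2 * tailNu ν x))
      = ∫⁻ t in Set.Ioi (1:ℝ), ENNReal.ofReal (t ^ (-(3:ℝ)/2))
          * ∫⁻ x in Set.Ioo 0 (κ * Real.sqrt t), G x := by
    refine setLIntegral_congr_fun measurableSet_Ioi (fun t ht => ?_)
    rw [ENNReal.ofReal_mul (Real.rpow_nonneg (le_of_lt (lt_trans zero_lt_one ht)) _), hconv]
  -- the product set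
  set S : Set (ℝ × ℝ) := {p : ℝ × ℝ | 1 < p.1 ∧ 0 < p.2 ∧ p.2 < κ * Real.sqrt p.1} with hSdef
  have hS_meas : MeasurableSet S := by
    rw [hSdef, Set.setOf_and, Set.setOf_and]
    exact (measurableSet_lt measurable_const measurable_fst).inter
      ((measurableSet_lt measurable_const measurable_snd).inter
        (measurableSet_lt measurable_snd
          ((Real.continuous_sqrt.measurable.comp measurable_fst).const_mul κ)))
  set F : ℝ × ℝ → ℝ≥0∞ :=
    S.indicator (fun p => ENNReal.ofReal (p.1 ^ (-(3:ℝ)/2)) * G p.2) with hFdef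
  have hF_meas : Measurable F :=
    Measurable.indicator ((hc_meas.comp measurable_fst).mul (hG_meas.comp measurable_snd)) hS_meas
  have hB1 : ∫⁻ t in Set.Ioi (1:ℝ), ENNReal.ofReal (t ^ (-(3:ℝ)/2))
        * ∫⁻ x in Set.Ioo 0 (κ * Real.sqrt t), G x
      = ∫⁻ t, ∫⁻ x, F (t, x) := by
    rw [← lintegral_indicator measurableSet_Ioi]
    refine lintegral_congr fun t => ?_
    by_cases ht : t ∈ Set.Ioi (1:ℝ)
    · rw [Set.indicator_of_mem ht]
      have hpt : ∀ x, F (t, x)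
          = (Set.Ioo 0 (κ * Real.sqrt t)).indicator
              (fun x => ENNReal.ofReal (t ^ (-(3:ℝ)/2)) * G x) x := by
        intro x
        rw [hFdef]
        by_cases hx : x ∈ Set.Ioo 0 (κ * Real.sqrt t)
        · rw [Set.indicator_of_mem hx, Set.indicator_of_mem]
          exact ⟨ht, hx.1, hx.2⟩
        · rw [Set.indicator_of_notMem hx, Set.indicator_of_notMem]
          exact fun hmem => hx ⟨hmem.2.1, hmem.2.2⟩
      simp_rw [hpt]
      rw [lintegral_indicator measurableSet_Ioo, lintegral_const_mul _ hG_meas]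
    · rw [Set.indicator_of_notMem ht]
      have hz : ∀ x, F (t, x) = 0 := by
        intro x
        rw [hFdef]
        exact Set.indicator_of_notMem (fun hmem => ht hmem.1) _
      simp [hz]
  have hB2 : ∀ x : ℝ, ∫⁻ t, F (t, x)
      = (Set.Ioi (0:ℝ)).indicator
          (fun x => G x * ENNReal.ofReal (2 * (max 1 ((x / κ) ^ 2)) ^ (-(1:ℝ)/2))) x := by
    intro x
    by_cases hx : x ∈ Set.Ioi (0:ℝ)
    · rw [Set.indicator_of_mem hx]
      have hx0 : (0:ℝ) < x := hx
      have hmax1 : (1:ℝ) ≤ max 1 ((x / κ) ^ 2) := le_max_left _ _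
      have hiff : ∀ t : ℝ, (t, x) ∈ S ↔ max 1 ((x / κ) ^ 2) < t := by
        intro t
        constructor
        · rintro ⟨ht1, -, htx⟩
          refine max_lt ht1 ?_
          have ht0 : (0:ℝ) ≤ t := by linarith [ht1]
          have h1 : x / κ < Real.sqrt t := (div_lt_iff₀ hκ0).mpr (by rwa [mul_comm] at htx)
          calc (x / κ) ^ 2 < Real.sqrt t ^ 2 :=
                pow_lt_pow_left₀ h1 (div_nonneg hx0.le hκ0.le) (by norm_num)
            _ = t := Real.sq_sqrt ht0
        · intro ht
          have ht1 : (1:ℝ) < t := lt_of_le_of_lt (le_max_left _ _) ht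
          have ht2 : (x / κ) ^ 2 < t := lt_of_le_of_lt (le_max_right _ _) ht
          refine ⟨ht1, hx0, ?_⟩
          have hlt : x / κ < Real.sqrt t := by
            rw [← Real.sqrt_sq (div_nonneg hx0.le hκ0.le)]
            exact Real.sqrt_lt_sqrt (sq_nonneg _) ht2
          calc x = κ * (x / κ) := by field_simp
            _ < κ * Real.sqrt t := mul_lt_mul_of_pos_left hlt hκ0
      have hFt : ∀ t, F (t, x)
          = (Set.Ioi (max 1 ((x / κ) ^ 2))).indicator
              (fun t => ENNReal.ofReal (t ^ (-(3:ℝ)/2)) * G x) t := by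
        intro t
        rw [hFdef]
        by_cases ht : (t, x) ∈ S
        · rw [Set.indicator_of_mem ht, Set.indicator_of_mem
            (show t ∈ Set.Ioi (max 1 ((x / κ) ^ 2)) from (hiff t).mp ht)]
        · rw [Set.indicator_of_notMem ht, Set.indicator_of_notMem
            (fun hmem : t ∈ Set.Ioi (max 1 ((x / κ) ^ 2)) => ht ((hiff t).mpr hmem))]
      simp_rw [hFt]
      rw [lintegral_indicator measurableSet_Ioi, lintegral_mul_const _ hc_meas,
        htail_int _ hmax1, mul_comm]
    · rw [Set.indicator_of_notMem hx]
      have hz : ∀ t, F (t, x) = 0 := by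
        intro t
        rw [hFdef]
        exact Set.indicator_of_notMem (fun hmem => hx hmem.2.1) _
      simp [hz]
  have hswap : ∫⁻ t, ∫⁻ x, F (t, x) = ∫⁻ x, ∫⁻ t, F (t, x) :=
    lintegral_lintegral_swap (f := fun t x => F (t, x)) (by exact hF_meas.aemeasurable)
  -- Step C : layercake
  have hC : ∫⁻ x in Set.Ioi (0:ℝ), ENNReal.ofReal x * T x
      = ∫⁻ y, ENNReal.ofReal (y ^ 2 / 2) ∂ν := by
    set F2 : ℝ × ℝ → ℝ≥0∞ :=
      ({p : ℝ × ℝ | 0 < p.1 ∧ p.1 ≤ |p.2|}).indicator (fun p => ENNReal.ofReal p.1) with hF2def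
    have hS2 : MeasurableSet {p : ℝ × ℝ | 0 < p.1 ∧ p.1 ≤ |p.2|} := by
      rw [Set.setOf_and]
      exact (measurableSet_lt measurable_const measurable_fst).inter
        (measurableSet_le measurable_fst (continuous_abs.measurable.comp measurable_snd))
    have hF2m : Measurable F2 :=
      Measurable.indicator (ENNReal.measurable_ofReal.comp measurable_fst) hS2
    have h1 : ∫⁻ x in Set.Ioi (0:ℝ), ENNReal.ofReal x * T x = ∫⁻ x, ∫⁻ y, F2 (x, y) ∂ν := by
      rw [← lintegral_indicator measurableSet_Ioi]
      refine lintegral_congr fun x => ?_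
      by_cases hx : x ∈ Set.Ioi (0:ℝ)
      · rw [Set.indicator_of_mem hx]
        have hpt : ∀ y, F2 (x, y)
            = ({y : ℝ | x ≤ |y|}).indicator (fun _ => ENNReal.ofReal x) y := by
          intro y
          rw [hF2def]
          by_cases hy : y ∈ {y : ℝ | x ≤ |y|}
          · rw [Set.indicator_of_mem hy, Set.indicator_of_mem]
            exact ⟨hx, hy⟩
          · rw [Set.indicator_of_notMem hy, Set.indicator_of_notMem]
            exact fun hm => hy hm.2
        simp_rw [hpt]
        rw [lintegral_indicator
          (measurableSet_le measurable_const continuous_abs.measurable), setLIntegral_const]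
      · rw [Set.indicator_of_notMem hx]
        have hz : ∀ y, F2 (x, y) = 0 := by
          intro y
          rw [hF2def]
          exact Set.indicator_of_notMem (fun hm => hx hm.1) _
        simp [hz]
    have h2 : ∀ y : ℝ, ∫⁻ x, F2 (x, y) = ENNReal.ofReal (y ^ 2 / 2) := by
      intro y
      have hpt : ∀ x, F2 (x, y) = (Set.Ioc 0 |y|).indicator ENNReal.ofReal x := by
        intro x
        rw [hF2def]
        by_cases hx : x ∈ Set.Ioc 0 |y|
        · rw [Set.indicator_of_mem hx, Set.indicator_of_mem]
          exact ⟨hx.1, hx.2⟩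
        · rw [Set.indicator_of_notMem hx, Set.indicator_of_notMem]
          exact fun hm => hx ⟨hm.1, hm.2⟩
      simp_rw [hpt]
      rw [lintegral_indicator measurableSet_Ioc]
      have hid := ofReal_integral_eq_lintegral_ofReal (f := fun x : ℝ => x)
        (μ := volume.restrict (Set.Ioc 0 |y|)) continuous_id.integrableOn_Ioc
        (ae_restrict_of_forall_mem measurableSet_Ioc fun x hx => hx.1.le)
      rw [← hid]
      congr 1
      rw [← _root_.intervalIntegral.integral_of_le (abs_nonneg y)]
      simp [sq_abs]
    rw [h1, lintegral_lintegral_swap (f := fun x y => F2 (x, y)) (by exact hF2m.aemeasurable)]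
    exact lintegral_congr h2
  -- split of outer integral
  have hsplit : Set.Ioi (0:ℝ) = Set.Ioo 0 κ ∪ Set.Ici κ := (Set.Ioo_union_Ici_eq_Ioi hκ0).symm
  have hdisj : Disjoint (Set.Ioo (0:ℝ) κ) (Set.Ici κ) :=
    Set.disjoint_left.mpr fun x hx hx' => absurd hx.2 (not_lt.mpr hx')
  have hIoo_nonneg : 0 ≤ ∫ x in Set.Ioo (0:ℝ) κ, x ^ 2 * tailNu ν x :=
    setIntegral_nonneg measurableSet_Ioo fun x _ => hf_nonneg x
  have hI_nonneg : 0 ≤ ∫ x, x ^ 2 ∂ν := integral_nonneg fun x => sq_nonneg x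
  have hpart1 : ∫⁻ x in Set.Ioo (0:ℝ) κ,
        G x * ENNReal.ofReal (2 * (max 1 ((x / κ) ^ 2)) ^ (-(1:ℝ)/2))
      = ENNReal.ofReal (2 * ∫ x in Set.Ioo (0:ℝ) κ, x ^ 2 * tailNu ν x) := by
    have hpt : ∀ x ∈ Set.Ioo (0:ℝ) κ,
        G x * ENNReal.ofReal (2 * (max 1 ((x / κ) ^ 2)) ^ (-(1:ℝ)/2))
          = ENNReal.ofReal 2 * G x := by
      intro x hx
      have hlt : (x / κ) ^ 2 < 1 := by
        have h1 : x / κ < 1 := (div_lt_one hκ0).mpr hx.2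
        have h0 : 0 ≤ x / κ := div_nonneg hx.1.le hκ0.le
        nlinarith
      rw [max_eq_left hlt.le, Real.one_rpow, mul_one, mul_comm]
    rw [setLIntegral_congr_fun measurableSet_Ioo hpt,
      lintegral_const_mul _ hG_meas, ← hconv κ,
      ← ENNReal.ofReal_mul (by norm_num : (0:ℝ) ≤ 2)]
  have hxT_meas : Measurable fun x : ℝ => ENNReal.ofReal x * T x :=
    (ENNReal.measurable_ofReal.comp measurable_id).mul hT_meas
  have hpart2 : ∫⁻ x in Set.Ici κ,
        G x * ENNReal.ofReal (2 * (max 1 ((x / κ) ^ 2)) ^ (-(1:ℝ)/2))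
      ≤ ENNReal.ofReal (κ * ∫ x, x ^ 2 ∂ν) := by
    have hpt : ∀ x ∈ Set.Ici κ,
        G x * ENNReal.ofReal (2 * (max 1 ((x / κ) ^ 2)) ^ (-(1:ℝ)/2))
          = ENNReal.ofReal (2 * κ) * (ENNReal.ofReal x * T x) := by
      intro x hx
      have hx0 : (0:ℝ) < x := lt_of_lt_of_le hκ0 hx
      have hone : (1:ℝ) ≤ x / κ := (one_le_div hκ0).mpr hx
      have h1 : (1:ℝ) ≤ (x / κ) ^ 2 := by nlinarith
      have h2 : ((x / κ) ^ 2 : ℝ) ^ (-(1:ℝ)/2) = κ / x := by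
        have hxk : (0:ℝ) ≤ x / κ := div_nonneg hx0.le hκ0.le
        rw [← Real.rpow_natCast (x / κ) 2, ← Real.rpow_mul hxk,
          show ((2:ℕ):ℝ) * (-(1:ℝ)/2) = -1 by push_cast; ring,
          Real.rpow_neg_one, inv_div]
      rw [max_eq_right h1, h2, hGdef]
      calc ENNReal.ofReal (x ^ 2) * T x * ENNReal.ofReal (2 * (κ / x))
          = ENNReal.ofReal (x ^ 2) * ENNReal.ofReal (2 * (κ / x)) * T x := by ring
        _ = ENNReal.ofReal (x ^ 2 * (2 * (κ / x))) * T x := by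
            rw [← ENNReal.ofReal_mul (sq_nonneg x)]
        _ = ENNReal.ofReal (2 * κ * x) * T x := by
            rw [show x ^ 2 * (2 * (κ / x)) = 2 * κ * x by field_simp]
        _ = ENNReal.ofReal (2 * κ) * (ENNReal.ofReal x * T x) := by
            rw [ENNReal.ofReal_mul (by positivity)]; ring
    rw [setLIntegral_congr_fun measurableSet_Ici hpt,
      lintegral_const_mul _ hxT_meas]
    have hmono : ∫⁻ x in Set.Ici κ, ENNReal.ofReal x * T x
        ≤ ∫⁻ x in Set.Ioi (0:ℝ), ENNReal.ofReal x * T x :=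
      lintegral_mono_set fun x hx => lt_of_lt_of_le hκ0 hx
    refine le_trans (mul_le_mul_right hmono _) ?_
    rw [hC, ← ofReal_integral_eq_lintegral_ofReal (hint.div_const 2)
      (ae_of_all _ fun y => by positivity),
      ← ENNReal.ofReal_mul (by positivity)]
    refine ENNReal.ofReal_le_ofReal (le_of_eq ?_)
    rw [integral_div]
    ring
  -- assemble
  rw [stepA, hB1, hswap, lintegral_congr hB2, lintegral_indicator measurableSet_Ioi, hsplit,
    lintegral_union measurableSet_Ici hdisj, hpart1]
  refine le_trans (add_le_add_right hpart2 _) ?_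
  exact le_of_eq (ENNReal.ofReal_add (by positivity) (by positivity)).symm


end
end

section
/- With φ(a) := sup_{x∈ℝ} |Φ(x) − Φ(ax)| for a ∈ (0,1), one has φ(a)/(1−a) → 1/√(2eπ) as a ↑ 1. -/
open MeasureTheory ProbabilityTheory Real Filter Set

noncomputable section

local notation "f" => gaussianPDFReal 0 1

lemma f_eq (x : ℝ) : f x = (Real.sqrt (2 * π))⁻¹ * Real.exp (-(x ^ 2) / 2) := by
  simp [gaussianPDFReal]

lemma f_anti {s t : ℝ} (hs : 0 ≤ s) (hst : s ≤ t) : f t ≤ f s := by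
  rw [f_eq, f_eq]
  gcongr

lemma f_symm (x : ℝ) : f (-x) = f x := by rw [f_eq, f_eq]; ring_nf

lemma f_mul_le (t : ℝ) (ht : 0 ≤ t) : t * f t ≤ f 1 := by
  rw [f_eq, f_eq]
  have h1 : (t ^ 2 - 1) / 2 + 1 ≤ Real.exp ((t ^ 2 - 1) / 2) := Real.add_one_le_exp _
  have h2 : t ≤ Real.exp ((t ^ 2 - 1) / 2) := by nlinarith [sq_nonneg (t-1)]
  have h3 : Real.exp ((t ^ 2 - 1) / 2) * Real.exp (-(t^2)/2) = Real.exp (-(1:ℝ)^2/2) := by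
    exact Real.exp_add _ _ ▸ (Real.exp_eq_exp.2 (by ring) : Real.exp ((t ^ 2 - 1) / 2 + -(t^2)/2) = _)
  have h4 : t * Real.exp (-(t^2)/2) ≤ Real.exp (-(1:ℝ)^2/2) := by
    calc t * Real.exp (-(t^2)/2) ≤ Real.exp ((t ^ 2 - 1) / 2) * Real.exp (-(t^2)/2) := by
          gcongr
      _ = _ := h3
  have h5 : (0:ℝ) < (Real.sqrt (2 * π))⁻¹ := by positivity
  calc t * ((Real.sqrt (2 * π))⁻¹ * Real.exp (-(t^2)/2))
      = (Real.sqrt (2 * π))⁻¹ * (t * Real.exp (-(t^2)/2)) := by ring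
    _ ≤ (Real.sqrt (2 * π))⁻¹ * Real.exp (-(1:ℝ)^2/2) := by gcongr

lemma cdf_sub' {b c : ℝ} (hbc : b ≤ c) :
    stdGaussianCDF c - stdGaussianCDF b = ∫ x in Set.Ioc b c, f x := by
  have key : ∀ y : ℝ, stdGaussianCDF y = ∫ x in Set.Iic y, f x := by
    intro y
    rw [stdGaussianCDF, gaussianReal_apply_eq_integral 0 one_ne_zero,
      ENNReal.toReal_ofReal (setIntegral_nonneg measurableSet_Iic
        (fun x _ => gaussianPDFReal_nonneg 0 1 x))]
  rw [key, key]
  rw [← Set.Iic_union_Ioc_eq_Iic hbc,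
    setIntegral_union (Set.Iic_disjoint_Ioc le_rfl) measurableSet_Ioc
      (integrable_gaussianPDFReal 0 1).integrableOn
      (integrable_gaussianPDFReal 0 1).integrableOn]
  ring

lemma int_le_of_ub {b c K : ℝ} (hbc : b ≤ c) (hub : ∀ x ∈ Set.Ioc b c, f x ≤ K) :
    ∫ x in Set.Ioc b c, f x ≤ (c - b) * K := by
  have h1 : ∫ x in Set.Ioc b c, f x ≤ ∫ _x in Set.Ioc b c, K :=
    setIntegral_mono_on (integrable_gaussianPDFReal 0 1).integrableOn
      (integrableOn_const (by rw [Real.volume_Ioc]; exact ENNReal.ofReal_ne_top) enorm_ne_top)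
      measurableSet_Ioc hub
  rwa [setIntegral_const, measureReal_def, Real.volume_Ioc, ENNReal.toReal_ofReal (by linarith),
    smul_eq_mul] at h1

lemma int_ge_of_lb {b c K : ℝ} (hbc : b ≤ c) (hlb : ∀ x ∈ Set.Ioc b c, K ≤ f x) :
    (c - b) * K ≤ ∫ x in Set.Ioc b c, f x := by
  have h1 : ∫ _x in Set.Ioc b c, K ≤ ∫ x in Set.Ioc b c, f x :=
    setIntegral_mono_on
      (integrableOn_const (by rw [Real.volume_Ioc]; exact ENNReal.ofReal_ne_top) enorm_ne_top)
      (integrable_gaussianPDFReal 0 1).integrableOn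
      measurableSet_Ioc hlb
  rwa [setIntegral_const, measureReal_def, Real.volume_Ioc, ENNReal.toReal_ofReal (by linarith),
    smul_eq_mul] at h1

lemma key_ub {a : ℝ} (ha : a ∈ Set.Ioo (0:ℝ) 1) (x : ℝ) :
    |stdGaussianCDF x - stdGaussianCDF (a * x)| ≤ (1 - a) / a * f 1 := by
  obtain ⟨ha0, ha1⟩ := ha
  rcases le_or_gt 0 x with hx | hx
  · have hax : a * x ≤ x := by nlinarith
    have hax0 : 0 ≤ a * x := by positivity
    have hnn : 0 ≤ stdGaussianCDF x - stdGaussianCDF (a * x) := by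
      rw [cdf_sub' hax]
      exact setIntegral_nonneg measurableSet_Ioc fun t _ => gaussianPDFReal_nonneg 0 1 t
    rw [abs_of_nonneg hnn, cdf_sub' hax]
    calc ∫ t in Set.Ioc (a*x) x, f t ≤ (x - a*x) * f (a*x) :=
          int_le_of_ub hax fun t ht => f_anti hax0 ht.1.le
      _ = (1 - a) / a * (a * x * f (a*x)) := by field_simp
      _ ≤ (1 - a) / a * f 1 := by
          have := f_mul_le (a*x) hax0
          have h2 : (0:ℝ) ≤ (1 - a)/a := div_nonneg (by linarith) ha0.le
          nlinarith
  · have hax : x ≤ a * x := by nlinarith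
    have hax0 : a * x ≤ 0 := by nlinarith
    have hnn : 0 ≤ stdGaussianCDF (a * x) - stdGaussianCDF x := by
      rw [cdf_sub' hax]
      exact setIntegral_nonneg measurableSet_Ioc fun t _ => gaussianPDFReal_nonneg 0 1 t
    rw [abs_sub_comm, abs_of_nonneg hnn, cdf_sub' hax]
    calc ∫ t in Set.Ioc x (a*x), f t ≤ (a*x - x) * f (a*x) := by
          refine int_le_of_ub hax fun t ht => ?_
          have h := f_anti (s := -(a*x)) (t := -t) (by linarith) (by linarith [ht.2])
          rwa [f_symm, f_symm] at h
      _ = (1 - a) / a * ((-(a * x)) * f (-(a*x))) := by rw [f_symm]; field_simp; ring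
      _ ≤ (1 - a) / a * f 1 := by
          have := f_mul_le (-(a*x)) (by linarith)
          have h2 : (0:ℝ) ≤ (1 - a)/a := div_nonneg (by linarith) ha0.le
          nlinarith

lemma key_lb {a : ℝ} (ha : a ∈ Set.Ioo (0:ℝ) 1) :
    (1 - a) * f 1 ≤ stdGaussianCDF 1 - stdGaussianCDF a := by
  rw [cdf_sub' ha.2.le]
  exact int_ge_of_lb ha.2.le fun t ht => f_anti (le_trans ha.1.le ht.1.le) ht.2

lemma f_one_eq : f 1 = 1 / Real.sqrt (2 * Real.exp 1 * π) := by
  rw [f_eq]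
  rw [show (2:ℝ) * Real.exp 1 * π = 2 * π * Real.exp 1 by ring]
  rw [Real.sqrt_mul (by positivity : (0:ℝ) ≤ 2 * π), ← Real.exp_half]
  rw [one_div, mul_inv, ← Real.exp_neg]
  norm_num


/-- `φ(a)/(1−a) → 1/√(2eπ)` as `a ↑ 1`, where `φ(a) = sup_x |Φ(x) − Φ(ax)|`. -/
theorem stmt17 :
    Filter.Tendsto
      (fun a : ℝ => (⨆ x : ℝ, |stdGaussianCDF x - stdGaussianCDF (a * x)|) / (1 - a))
      (nhdsWithin 1 (Set.Ioo 0 1))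
      (nhds (1 / Real.sqrt (2 * Real.exp 1 * Real.pi))) := by
  rw [← f_one_eq]
  have hlow : ∀ a ∈ Set.Ioo (0:ℝ) 1,
      f 1 ≤ (⨆ x : ℝ, |stdGaussianCDF x - stdGaussianCDF (a * x)|) / (1 - a) := by
    intro a ha
    have h1a : (0:ℝ) < 1 - a := by linarith [ha.2]
    have bdd : BddAbove (Set.range fun x : ℝ => |stdGaussianCDF x - stdGaussianCDF (a * x)|) :=
      ⟨(1 - a) / a * f 1, by rintro _ ⟨x, rfl⟩; exact key_ub ha x⟩
    rw [le_div_iff₀ h1a]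
    calc f 1 * (1 - a) = (1 - a) * f 1 := by ring
      _ ≤ stdGaussianCDF 1 - stdGaussianCDF a := key_lb ha
      _ ≤ |stdGaussianCDF 1 - stdGaussianCDF (a * 1)| := by rw [mul_one]; exact le_abs_self _
      _ ≤ _ := le_ciSup bdd 1
  have hup : ∀ a ∈ Set.Ioo (0:ℝ) 1,
      (⨆ x : ℝ, |stdGaussianCDF x - stdGaussianCDF (a * x)|) / (1 - a) ≤ f 1 / a := by
    intro a ha
    have h1a : (0:ℝ) < 1 - a := by linarith [ha.2]
    have hS : (⨆ x : ℝ, |stdGaussianCDF x - stdGaussianCDF (a * x)|) ≤ (1 - a) / a * f 1 :=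
      ciSup_le (key_ub ha)
    rw [div_le_div_iff₀ h1a ha.1]
    calc (⨆ x : ℝ, |stdGaussianCDF x - stdGaussianCDF (a * x)|) * a
        ≤ ((1 - a) / a * f 1) * a := by
          have := ha.1
          gcongr
      _ = f 1 * (1 - a) := by
          have ha0 : a ≠ 0 := ha.1.ne'
          field_simp
  have htop : Filter.Tendsto (fun a : ℝ => f 1 / a) (nhdsWithin 1 (Set.Ioo 0 1)) (nhds (f 1)) := by
    have : Filter.Tendsto (fun a : ℝ => f 1 / a) (nhds 1) (nhds (f 1 / 1)) :=
      Filter.Tendsto.div tendsto_const_nhds tendsto_id one_ne_zero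
    rw [div_one] at this
    exact this.mono_left nhdsWithin_le_nhds
  exact tendsto_of_tendsto_of_tendsto_of_le_of_le' tendsto_const_nhds htop
    (eventually_nhdsWithin_of_forall hlow) (eventually_nhdsWithin_of_forall hup)


end
end

section
/- Let X be a Lévy process with zero mean, finite variance σ² > 0, and truncated standard deviations σ_t defined as in Theorem 1 with σ_t → σ as t → ∞. Assume ∫_1^∞ sup_x |P(X_t/√t ≤ x) − Φ(x/σ_t)| dt/t < ∞. Then ∫_1^∞ sup_x |P(X_t/√t ≤ x) − Φ(x/σ)| dt/t < ∞ if and only if ∫_1^∞ (σ − σ_t) dt/t < ∞. -/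
open MeasureTheory ProbabilityTheory Real Filter Set

noncomputable section

open scoped ENNReal

lemma pdf01 (x : ℝ) : gaussianPDFReal 0 1 x = (Real.sqrt (2*π))⁻¹ * Real.exp (-(x^2)/2) := by
  simp [gaussianPDFReal]

lemma pdf_nonneg (x : ℝ) : 0 ≤ gaussianPDFReal 0 1 x := gaussianPDFReal_nonneg 0 1 x

lemma pdf_le_one (x : ℝ) : gaussianPDFReal 0 1 x ≤ 1 := by
  rw [pdf01]
  have h1 : Real.exp (-(x^2)/2) ≤ 1 := by
    rw [Real.exp_le_one_iff]
    nlinarith [sq_nonneg x]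
  have h2 : (Real.sqrt (2*π))⁻¹ ≤ 1 := by
    rw [inv_le_one_iff₀]
    right
    rw [show (1:ℝ) = Real.sqrt 1 by simp]
    apply Real.sqrt_le_sqrt
    nlinarith [Real.pi_gt_three]
  calc (Real.sqrt (2*π))⁻¹ * Real.exp (-(x^2)/2) ≤ 1 * 1 := by
        apply mul_le_mul h2 h1 (by positivity) (by norm_num)
    _ = 1 := by ring

lemma pdf_anti {a b : ℝ} (h : |a| ≤ |b|) : gaussianPDFReal 0 1 b ≤ gaussianPDFReal 0 1 a := by
  rw [pdf01, pdf01]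
  have : Real.exp (-(b^2)/2) ≤ Real.exp (-(a^2)/2) := by
    apply Real.exp_le_exp.2
    have h2 := pow_le_pow_left₀ (abs_nonneg a) h 2
    rw [sq_abs, sq_abs] at h2
    linarith
  have hpos : (0:ℝ) ≤ (Real.sqrt (2*π))⁻¹ := by positivity
  exact mul_le_mul_of_nonneg_left this hpos

lemma mul_pdf_le_half {y : ℝ} (hy : 0 ≤ y) : y * gaussianPDFReal 0 1 y ≤ 1/2 := by
  rw [pdf01]
  have h1 : y * Real.exp (-(y^2)/2) ≤ 1 := by
    have heq : -(y^2)/2 = -(y^2/2) := by ring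
    rw [heq, Real.exp_neg]
    have hy2 : y ≤ Real.exp (y^2/2) := by
      calc y ≤ 1 + y^2/2 := by nlinarith
        _ ≤ Real.exp (y^2/2) := by linarith [Real.add_one_le_exp (y^2/2)]
    calc y * (Real.exp (y^2/2))⁻¹ ≤ Real.exp (y^2/2) * (Real.exp (y^2/2))⁻¹ := by
          apply mul_le_mul_of_nonneg_right hy2 (by positivity)
      _ = 1 := by
          rw [mul_inv_cancel₀ (Real.exp_ne_zero _)]
  have h2 : (Real.sqrt (2*π))⁻¹ ≤ 1/2 := by
    rw [inv_le_comm₀ (by positivity) (by norm_num)]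
    rw [Real.le_sqrt (by norm_num) (by positivity)]
    nlinarith [Real.pi_gt_three]
  calc y * ((Real.sqrt (2*π))⁻¹ * Real.exp (-(y^2)/2))
      = (Real.sqrt (2*π))⁻¹ * (y * Real.exp (-(y^2)/2)) := by ring
    _ ≤ (1/2) * 1 := by
        apply mul_le_mul h2 h1 (by positivity) (by norm_num)
    _ = 1/2 := by ring

lemma stdGaussianCDF_eq (x : ℝ) :
    stdGaussianCDF x = ∫ y in Iic x, gaussianPDFReal 0 1 y := by
  rw [stdGaussianCDF, gaussianReal_apply_eq_integral 0 one_ne_zero,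
    ENNReal.toReal_ofReal]
  exact setIntegral_nonneg measurableSet_Iic fun y _ => pdf_nonneg y

lemma stdGaussianCDF_sub (a b : ℝ) :
    stdGaussianCDF b - stdGaussianCDF a = ∫ y in a..b, gaussianPDFReal 0 1 y := by
  rw [stdGaussianCDF_eq, stdGaussianCDF_eq]
  exact intervalIntegral.integral_Iic_sub_Iic ((integrable_gaussianPDFReal 0 1).integrableOn)
    ((integrable_gaussianPDFReal 0 1).integrableOn)

lemma stdGaussianCDF_nonneg (x : ℝ) : 0 ≤ stdGaussianCDF x := ENNReal.toReal_nonneg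

lemma stdGaussianCDF_le_one (x : ℝ) : stdGaussianCDF x ≤ 1 := by
  rw [stdGaussianCDF]
  have : (gaussianReal 0 1) (Set.Iic x) ≤ 1 := prob_le_one
  exact ENNReal.toReal_le_of_le_ofReal zero_le_one (by simpa using this)

lemma stdGaussianCDF_lipschitz (a b : ℝ) :
    |stdGaussianCDF b - stdGaussianCDF a| ≤ |b - a| := by
  rw [stdGaussianCDF_sub, ← Real.norm_eq_abs]
  calc ‖∫ y in a..b, gaussianPDFReal 0 1 y‖ ≤ 1 * |b - a| := by
        apply intervalIntegral.norm_integral_le_of_norm_le_const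
        intro y _
        rw [Real.norm_eq_abs, abs_of_nonneg (pdf_nonneg y)]
        exact pdf_le_one y
    _ = |b - a| := one_mul _

lemma stdGaussianCDF_continuous : Continuous stdGaussianCDF := by
  have : LipschitzWith 1 stdGaussianCDF := by
    apply LipschitzWith.of_dist_le_mul
    intro a b
    simpa [Real.dist_eq, abs_sub_comm] using stdGaussianCDF_lipschitz b a
  exact this.continuous


lemma pdf_abs_div (x σ : ℝ) : gaussianPDFReal 0 1 (x/σ) = gaussianPDFReal 0 1 (|x|/σ) := by
  rw [pdf01, pdf01, div_pow, div_pow, sq_abs]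

lemma gauss_upper {σ s : ℝ} (x : ℝ) (hσ : 0 < σ) (hs2 : σ/2 ≤ s) (hsσ : s ≤ σ) :
    |stdGaussianCDF (x/s) - stdGaussianCDF (x/σ)| ≤ (σ - s)/σ := by
  have hs : 0 < s := by linarith
  have key : ∀ u ∈ Set.uIoc (x/σ) (x/s), ‖gaussianPDFReal 0 1 u‖ ≤ gaussianPDFReal 0 1 (x/σ) := by
    intro u hu
    rw [Real.norm_eq_abs, abs_of_nonneg (pdf_nonneg u)]
    apply pdf_anti
    rcases le_or_gt 0 x with hx | hx
    · have hab : x/σ ≤ x/s := div_le_div_of_nonneg_left hx hs hsσ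
      rw [Set.uIoc_of_le hab] at hu
      have h0 : 0 ≤ x/σ := by positivity
      rw [abs_of_nonneg h0]
      exact le_trans hu.1.le (le_abs_self u)
    · have hab : x/s ≤ x/σ := by
        rw [div_le_div_iff₀ hs hσ]
        nlinarith
      rw [Set.uIoc_comm, Set.uIoc_of_le hab] at hu
      have h0 : x/σ < 0 := div_neg_of_neg_of_pos hx hσ
      have hu0 : u < 0 := lt_of_le_of_lt hu.2 h0
      rw [abs_of_neg h0, abs_of_neg hu0]
      linarith [hu.2]
  have hA : |stdGaussianCDF (x/s) - stdGaussianCDF (x/σ)|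
      ≤ gaussianPDFReal 0 1 (x/σ) * |x/s - x/σ| := by
    rw [stdGaussianCDF_sub, ← Real.norm_eq_abs]
    exact intervalIntegral.norm_integral_le_of_norm_le_const key
  have hlen' : |x/s - x/σ| = (|x|/σ) * ((σ - s)/s) := by
    rw [show x/s - x/σ = x * ((σ - s)/(s*σ)) by field_simp]
    rw [abs_mul, abs_of_nonneg (div_nonneg (by linarith) (by positivity) : (0:ℝ) ≤ (σ-s)/(s*σ))]
    rw [div_mul_div_comm, mul_comm σ s, ← mul_div_assoc]
  rw [pdf_abs_div] at hA
  have hy : 0 ≤ |x|/σ := by positivity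
  have hhalf := mul_pdf_le_half hy
  have hnn : 0 ≤ gaussianPDFReal 0 1 (|x|/σ) := pdf_nonneg _
  calc |stdGaussianCDF (x/s) - stdGaussianCDF (x/σ)|
      ≤ gaussianPDFReal 0 1 (|x|/σ) * ((|x|/σ) * ((σ - s)/s)) := by rw [← hlen']; exact hA
    _ = (|x|/σ * gaussianPDFReal 0 1 (|x|/σ)) * ((σ - s)/s) := by ring
    _ ≤ (1/2) * ((σ - s)/s) := by
        apply mul_le_mul_of_nonneg_right hhalf (div_nonneg (by linarith) hs.le)
    _ = (σ - s)/(2*s) := by ring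
    _ ≤ (σ - s)/σ := by
        rw [div_le_div_iff₀ (by positivity) hσ]
        nlinarith

lemma gauss_lower {σ s : ℝ} (hσ : 0 < σ) (hs2 : σ/2 ≤ s) (hsσ : s ≤ σ) :
    (σ - s) * (gaussianPDFReal 0 1 2 / σ) ≤ stdGaussianCDF (σ/s) - stdGaussianCDF 1 := by
  have hs : 0 < s := by linarith
  have hb1 : 1 ≤ σ/s := (one_le_div hs).2 hsσ
  have hb2 : σ/s ≤ 2 := by rw [div_le_iff₀ hs]; linarith
  rw [stdGaussianCDF_sub]
  have hmono : ∫ _ in (1:ℝ)..(σ/s), gaussianPDFReal 0 1 2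
      ≤ ∫ y in (1:ℝ)..(σ/s), gaussianPDFReal 0 1 y := by
    apply intervalIntegral.integral_mono_on hb1 intervalIntegrable_const
      ((integrable_gaussianPDFReal 0 1).intervalIntegrable)
    intro u hu
    apply pdf_anti
    rw [abs_of_nonneg (by linarith [hu.1] : (0:ℝ) ≤ u),
      abs_of_nonneg (by norm_num : (0:ℝ) ≤ 2)]
    exact le_trans hu.2 hb2
  rw [intervalIntegral.integral_const, smul_eq_mul] at hmono
  have hpdf2 : 0 ≤ gaussianPDFReal 0 1 2 := pdf_nonneg 2
  refine le_trans ?_ hmono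
  rw [show σ/s - 1 = (σ - s)/s by field_simp]
  rw [div_mul_eq_mul_div, mul_div_assoc]
  apply mul_le_mul_of_nonneg_left _ (by linarith)
  apply div_le_div_of_nonneg_left hpdf2 hs hsσ

lemma ciSup_rat_of_rightCont {h : ℝ → ℝ} (h1 : ∀ x, h x ≤ 1)
    (hrc : ∀ x, ContinuousWithinAt h (Ici x) x) :
    (⨆ x : ℝ, h x) = ⨆ q : ℚ, h q := by
  have bdd1 : BddAbove (Set.range h) := ⟨1, by rintro _ ⟨x, rfl⟩; exact h1 x⟩
  have bdd2 : BddAbove (Set.range fun q : ℚ => h q) := ⟨1, by rintro _ ⟨q, rfl⟩; exact h1 q⟩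
  apply le_antisymm
  · apply ciSup_le
    intro x
    have hseq : ∀ n : ℕ, ∃ q : ℚ, x < q ∧ (q:ℝ) < x + 1/(n+1) := by
      intro n
      exact exists_rat_btwn (lt_add_of_pos_right x (by positivity))
    choose q hq1 hq2 using hseq
    have hq_tendsto : Tendsto (fun n => (q n : ℝ)) atTop (nhds x) := by
      apply tendsto_of_tendsto_of_tendsto_of_le_of_le (g := fun _ : ℕ => x)
        (h := fun n : ℕ => x + 1/(n+1))
      · exact tendsto_const_nhds
      · have := tendsto_one_div_add_atTop_nhds_zero_nat (𝕜 := ℝ)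
        have h2 := (tendsto_const_nhds (x := x) (f := atTop (α := ℕ))).add this
        simpa using h2
      · exact fun n => (hq1 n).le
      · exact fun n => (hq2 n).le
    have hcomp : Tendsto (fun n => h (q n)) atTop (nhds (h x)) :=
      (hrc x).tendsto.comp (tendsto_nhdsWithin_of_tendsto_nhds_of_eventually_within _
        hq_tendsto (Eventually.of_forall fun n => (hq1 n).le))
    exact le_of_tendsto hcomp (Eventually.of_forall fun n => le_ciSup bdd2 (q n))
  · exact ciSup_le fun q => le_ciSup bdd1 (q:ℝ)

lemma measurable_levy_joint {Ω : Type*} [MeasurableSpace Ω] (X : ℝ → Ω → ℝ)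
    (hm : ∀ t, Measurable (X t))
    (hrc : ∀ ω, ∀ t : ℝ, 0 ≤ t → Tendsto (fun s => X s ω) (nhdsWithin t (Set.Ioi t)) (nhds (X t ω))) :
    Measurable fun p : ℝ × Ω => X (max p.1 1) p.2 := by
  have hmeas : ∀ n : ℕ, Measurable fun p : ℝ × Ω =>
      X ((⌈max p.1 1 * 2^n⌉ : ℤ) / 2^n) p.2 := by
    intro n
    have h2' : Measurable fun q : Ω × ℤ => X ((q.2 : ℝ) / 2^n) q.1 :=
      measurable_from_prod_countable_left fun k => by simpa using hm ((k:ℝ)/2^n)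
    have h2 : Measurable fun q : ℤ × Ω => X ((q.1 : ℝ) / 2^n) q.2 :=
      h2'.comp measurable_swap
    have h1 : Measurable fun p : ℝ × Ω => ((⌈max p.1 1 * 2^n⌉ : ℤ), p.2) :=
      ((Int.measurable_ceil.comp ((measurable_fst.max measurable_const).mul
        measurable_const))).prodMk measurable_snd
    exact h2.comp h1
  apply measurable_of_tendsto_metrizable hmeas
  rw [tendsto_pi_nhds]
  intro p
  set t : ℝ := max p.1 1 with ht_def
  have ht1 : (1:ℝ) ≤ t := le_max_right _ _
  have ht0 : (0:ℝ) ≤ t := by linarith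
  have hcw : ContinuousWithinAt (fun s => X s p.2) (Ici t) t :=
    continuousWithinAt_Ioi_iff_Ici.1 (hrc p.2 t ht0)
  have hle : ∀ n : ℕ, t ≤ (⌈t * 2^n⌉ : ℤ) / 2^n := by
    intro n
    rw [le_div_iff₀ (by positivity : (0:ℝ) < 2^n)]
    exact Int.le_ceil _
  have hub : ∀ n : ℕ, ((⌈t * 2^n⌉ : ℤ) : ℝ) / 2^n ≤ t + (2⁻¹)^n := by
    intro n
    rw [div_le_iff₀ (by positivity : (0:ℝ) < 2^n)]
    have := (Int.ceil_lt_add_one (t * 2^n)).le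
    calc ((⌈t * 2^n⌉ : ℤ) : ℝ) ≤ t * 2^n + 1 := this
      _ = (t + (2⁻¹)^n) * 2^n := by
          rw [add_mul, ← mul_pow]
          norm_num
  have htends : Tendsto (fun n : ℕ => ((⌈t * 2^n⌉ : ℤ) : ℝ) / 2^n) atTop (nhds t) := by
    apply tendsto_of_tendsto_of_tendsto_of_le_of_le (g := fun _ : ℕ => t)
      (h := fun n : ℕ => t + (2⁻¹)^n)
    · exact tendsto_const_nhds
    · have h0 : Tendsto (fun n : ℕ => ((2:ℝ)⁻¹)^n) atTop (nhds 0) :=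
        tendsto_pow_atTop_nhds_zero_of_lt_one (by norm_num) (by norm_num)
      have := (tendsto_const_nhds (x := t) (f := atTop (α := ℕ))).add h0
      simpa using this
    · exact hle
    · exact hub
  exact hcw.tendsto.comp (tendsto_nhdsWithin_of_tendsto_nhds_of_eventually_within _
    htends (Eventually.of_forall hle))

lemma measurable_cdf_t {Ω : Type*} [MeasurableSpace Ω] (P : Measure Ω) [SFinite P]
    {Z : ℝ × Ω → ℝ} (hZ : Measurable Z) (q : ℝ) :
    Measurable fun t : ℝ => (P {ω | Z (t, ω) ≤ q * Real.sqrt (max t 1)}).toReal := by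
  have hs : MeasurableSet {p : ℝ × Ω | Z p ≤ q * Real.sqrt (max p.1 1)} := by
    apply measurableSet_le hZ
    exact measurable_const.mul (Real.continuous_sqrt.measurable.comp
      (measurable_fst.max measurable_const))
  have h := measurable_measure_prodMk_left (ν := P) hs
  exact h.ennreal_toReal


lemma abs_sub_le_one' {a b : ℝ} (ha0 : 0 ≤ a) (ha1 : a ≤ 1) (hb0 : 0 ≤ b) (hb1 : b ≤ 1) :
    |a - b| ≤ 1 := abs_sub_le_iff.2 ⟨by linarith, by linarith⟩

theorem aux_iff {A B C Bm Cm : ℝ → ℝ} {T M k1 k2 : ℝ} (hT : 2 ≤ T) (hM : 0 ≤ M)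
    (hk1 : 0 < k1) (hk2 : 0 ≤ k2)
    (hB0 : ∀ t ∈ Ioc (1:ℝ) T, 0 ≤ B t) (hB1 : ∀ t ∈ Ioc (1:ℝ) T, B t ≤ 1)
    (hC0 : ∀ t ∈ Ioc (1:ℝ) T, 0 ≤ C t) (hC1 : ∀ t ∈ Ioc (1:ℝ) T, C t ≤ M)
    (hBmeas : Measurable Bm) (hBeq : ∀ t ∈ Ioi (1:ℝ), Bm t = B t)
    (hCmeas : Measurable Cm) (hCeq : ∀ t ∈ Ioi T, Cm t = C t)
    (hAB : ∀ t ∈ Ioi T, B t ≤ A t + k2 * C t)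
    (hBA : ∀ t ∈ Ioi T, k1 * C t ≤ A t + B t)
    (hA : (∫⁻ t in Ioi (1:ℝ), ENNReal.ofReal (A t / t)) < ⊤) :
    ((∫⁻ t in Ioi (1:ℝ), ENNReal.ofReal (B t / t)) < ⊤ ↔
      (∫⁻ t in Ioi (1:ℝ), ENNReal.ofReal (C t / t)) < ⊤) := by
  have hT1 : (1:ℝ) ≤ T := by linarith
  have split : ∀ f : ℝ → ℝ≥0∞, (∫⁻ t in Ioi (1:ℝ), f t)
      ≤ (∫⁻ t in Ioc (1:ℝ) T, f t) + ∫⁻ t in Ioi T, f t := by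
    intro f
    have hsub : Ioi (1:ℝ) ⊆ Ioc 1 T ∪ Ioi T := by
      intro x hx
      rcases le_or_gt x T with h | h
      · exact Or.inl ⟨hx, h⟩
      · exact Or.inr h
    calc (∫⁻ t in Ioi (1:ℝ), f t) ≤ ∫⁻ t in Ioc 1 T ∪ Ioi T, f t :=
          lintegral_mono' (Measure.restrict_mono hsub le_rfl) le_rfl
      _ ≤ _ := lintegral_union_le _ _ _
  have tail_le : ∀ f : ℝ → ℝ≥0∞, (∫⁻ t in Ioi T, f t) ≤ ∫⁻ t in Ioi (1:ℝ), f t := fun f =>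
    lintegral_mono' (Measure.restrict_mono (Ioi_subset_Ioi hT1) le_rfl) le_rfl
  have bounded_piece : ∀ (f : ℝ → ℝ) (M₀ : ℝ), (∀ t ∈ Ioc (1:ℝ) T, f t ≤ M₀) →
      (∫⁻ t in Ioc (1:ℝ) T, ENNReal.ofReal (f t)) < ⊤ := by
    intro f M₀ hf
    calc (∫⁻ t in Ioc (1:ℝ) T, ENNReal.ofReal (f t))
        ≤ ∫⁻ _ in Ioc (1:ℝ) T, ENNReal.ofReal M₀ := by
          apply lintegral_mono_ae
          rw [ae_restrict_iff' measurableSet_Ioc]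
          exact ae_of_all _ fun t ht => ENNReal.ofReal_le_ofReal (hf t ht)
      _ = ENNReal.ofReal M₀ * volume (Ioc (1:ℝ) T) := setLIntegral_const _ _
      _ < ⊤ := by
          rw [Real.volume_Ioc]
          exact ENNReal.mul_lt_top ENNReal.ofReal_lt_top ENNReal.ofReal_lt_top
  have hAtail : (∫⁻ t in Ioi T, ENNReal.ofReal (A t / t)) < ⊤ := lt_of_le_of_lt (tail_le _) hA
  constructor
  · intro hB
    have hBtail : (∫⁻ t in Ioi T, ENNReal.ofReal (Bm t / t)) < ⊤ := by
      have heq : (∫⁻ t in Ioi T, ENNReal.ofReal (Bm t / t))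
          = ∫⁻ t in Ioi T, ENNReal.ofReal (B t / t) := by
        apply setLIntegral_congr_fun measurableSet_Ioi
        exact fun t ht => by rw [hBeq t (lt_of_le_of_lt hT1 ht)]
      rw [heq]
      exact lt_of_le_of_lt (tail_le _) hB
    set r : ℝ≥0∞ := ENNReal.ofReal k1⁻¹ with hr
    have key : ∀ t ∈ Ioi T, ENNReal.ofReal (C t / t)
        ≤ r * ENNReal.ofReal (A t / t) + r * ENNReal.ofReal (Bm t / t) := by
      intro t ht
      have ht0 : (0:ℝ) < t := by have := ht.out; linarith
      have h1 : k1 * C t ≤ A t + Bm t := by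
        rw [hBeq t (lt_of_le_of_lt hT1 ht)]; exact hBA t ht
      have h2 : C t ≤ k1⁻¹ * (A t + Bm t) := by
        have h3 : C t = k1⁻¹ * (k1 * C t) := by field_simp
        rw [h3]
        exact mul_le_mul_of_nonneg_left h1 (inv_nonneg.2 hk1.le)
      have h4 : C t / t ≤ k1⁻¹ * (A t / t) + k1⁻¹ * (Bm t / t) := by
        calc C t / t ≤ (k1⁻¹ * (A t + Bm t)) / t := (div_le_div_iff_of_pos_right ht0).2 h2
          _ = k1⁻¹ * (A t / t) + k1⁻¹ * (Bm t / t) := by ring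
      calc ENNReal.ofReal (C t / t)
          ≤ ENNReal.ofReal (k1⁻¹ * (A t / t) + k1⁻¹ * (Bm t / t)) :=
            ENNReal.ofReal_le_ofReal h4
        _ ≤ ENNReal.ofReal (k1⁻¹ * (A t / t)) + ENNReal.ofReal (k1⁻¹ * (Bm t / t)) :=
            ENNReal.ofReal_add_le
        _ = r * ENNReal.ofReal (A t / t) + r * ENNReal.ofReal (Bm t / t) := by
            rw [ENNReal.ofReal_mul (inv_nonneg.2 hk1.le),
              ENNReal.ofReal_mul (inv_nonneg.2 hk1.le)]
    have hCtail : (∫⁻ t in Ioi T, ENNReal.ofReal (C t / t)) < ⊤ := by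
      have hmeasg : Measurable fun t : ℝ => r * ENNReal.ofReal (Bm t / t) :=
        ((hBmeas.div measurable_id).ennreal_ofReal).const_mul r
      calc (∫⁻ t in Ioi T, ENNReal.ofReal (C t / t))
          ≤ ∫⁻ t in Ioi T, (r * ENNReal.ofReal (A t / t) + r * ENNReal.ofReal (Bm t / t)) := by
            apply lintegral_mono_ae
            rw [ae_restrict_iff' measurableSet_Ioi]
            exact ae_of_all _ key
        _ = (∫⁻ t in Ioi T, r * ENNReal.ofReal (A t / t))
            + ∫⁻ t in Ioi T, r * ENNReal.ofReal (Bm t / t) := lintegral_add_right _ hmeasg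
        _ = r * (∫⁻ t in Ioi T, ENNReal.ofReal (A t / t))
            + r * ∫⁻ t in Ioi T, ENNReal.ofReal (Bm t / t) := by
            rw [lintegral_const_mul' r _ ENNReal.ofReal_ne_top,
              lintegral_const_mul' r _ ENNReal.ofReal_ne_top]
        _ < ⊤ := ENNReal.add_lt_top.2
            ⟨ENNReal.mul_lt_top ENNReal.ofReal_lt_top hAtail,
             ENNReal.mul_lt_top ENNReal.ofReal_lt_top hBtail⟩
    refine lt_of_le_of_lt (split _) (ENNReal.add_lt_top.2 ⟨?_, hCtail⟩)
    apply bounded_piece _ M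
    intro t ht
    exact le_trans (div_le_self (hC0 t ht) ht.1.le) (hC1 t ht)
  · intro hC
    have hCtail' : (∫⁻ t in Ioi T, ENNReal.ofReal (Cm t / t)) < ⊤ := by
      have heq : (∫⁻ t in Ioi T, ENNReal.ofReal (Cm t / t))
          = ∫⁻ t in Ioi T, ENNReal.ofReal (C t / t) := by
        apply setLIntegral_congr_fun measurableSet_Ioi
        exact fun t ht => by rw [hCeq t ht]
      rw [heq]
      exact lt_of_le_of_lt (tail_le _) hC
    set r2 : ℝ≥0∞ := ENNReal.ofReal k2 with hr2
    have key2 : ∀ t ∈ Ioi T, ENNReal.ofReal (B t / t)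
        ≤ ENNReal.ofReal (A t / t) + r2 * ENNReal.ofReal (Cm t / t) := by
      intro t ht
      have ht0 : (0:ℝ) < t := by have := ht.out; linarith
      have h1 : B t ≤ A t + k2 * Cm t := by
        rw [hCeq t ht]; exact hAB t ht
      have h4 : B t / t ≤ A t / t + k2 * (Cm t / t) := by
        calc B t / t ≤ (A t + k2 * Cm t) / t := (div_le_div_iff_of_pos_right ht0).2 h1
          _ = A t / t + k2 * (Cm t / t) := by ring
      calc ENNReal.ofReal (B t / t)
          ≤ ENNReal.ofReal (A t / t + k2 * (Cm t / t)) := ENNReal.ofReal_le_ofReal h4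
        _ ≤ ENNReal.ofReal (A t / t) + ENNReal.ofReal (k2 * (Cm t / t)) :=
            ENNReal.ofReal_add_le
        _ = ENNReal.ofReal (A t / t) + r2 * ENNReal.ofReal (Cm t / t) := by
            rw [ENNReal.ofReal_mul hk2]
    have hBtail' : (∫⁻ t in Ioi T, ENNReal.ofReal (B t / t)) < ⊤ := by
      have hmeasg : Measurable fun t : ℝ => r2 * ENNReal.ofReal (Cm t / t) :=
        ((hCmeas.div measurable_id).ennreal_ofReal).const_mul r2
      calc (∫⁻ t in Ioi T, ENNReal.ofReal (B t / t))
          ≤ ∫⁻ t in Ioi T, (ENNReal.ofReal (A t / t) + r2 * ENNReal.ofReal (Cm t / t)) := by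
            apply lintegral_mono_ae
            rw [ae_restrict_iff' measurableSet_Ioi]
            exact ae_of_all _ key2
        _ = (∫⁻ t in Ioi T, ENNReal.ofReal (A t / t))
            + ∫⁻ t in Ioi T, r2 * ENNReal.ofReal (Cm t / t) := lintegral_add_right _ hmeasg
        _ = (∫⁻ t in Ioi T, ENNReal.ofReal (A t / t))
            + r2 * ∫⁻ t in Ioi T, ENNReal.ofReal (Cm t / t) := by
            rw [lintegral_const_mul' r2 _ ENNReal.ofReal_ne_top]
        _ < ⊤ := ENNReal.add_lt_top.2
            ⟨hAtail, ENNReal.mul_lt_top ENNReal.ofReal_lt_top hCtail'⟩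
    refine lt_of_le_of_lt (split _) (ENNReal.add_lt_top.2 ⟨?_, hBtail'⟩)
    apply bounded_piece _ 1
    intro t ht
    exact le_trans (div_le_self (hB0 t ht) ht.1.le) (hB1 t ht)

/-- Given the conclusion of Theorem 1 (integrability of the Kolmogorov distance with
the truncated variance `σ_t`), the corresponding condition with `σ` holds iff
`∫_1^∞ (σ − σ_t) dt/t < ∞`. -/
theorem stmt19 {Ω : Type*} [MeasurableSpace Ω] (P : Measure Ω) (X : ℝ → Ω → ℝ)
    (S2 β σ κ : ℝ) (ν : Measure ℝ)
    (hX : IsLevyProcess P X) (hT : HasLevyTriplet P X S2 ν β)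
    (hmom : Integrable (fun ω => (X 1 ω) ^ 2) P)
    (hmean : Integrable (X 1) P) (hmean0 : ∫ ω, X 1 ω ∂P = 0)
    (hσ : σ = Real.sqrt (∫ ω, (X 1 ω) ^ 2 ∂P)) (hσpos : 0 < σ)
    (hκ : 1 ≤ κ)
    (hσ1 : 0 < σ ^ 2 - ∫ x in {y : ℝ | κ ≤ |y|}, x ^ 2 ∂ν)
    (hconv : Filter.Tendsto
      (fun t : ℝ => Real.sqrt (σ ^ 2 - ∫ x in {y : ℝ | κ * Real.sqrt t ≤ |y|}, x ^ 2 ∂ν))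
      Filter.atTop (nhds σ))
    (hthm1 : ∫⁻ t in Set.Ioi (1 : ℝ), ENNReal.ofReal
        ((⨆ x : ℝ, |(P {ω | X t ω / Real.sqrt t ≤ x}).toReal -
          stdGaussianCDF (x / Real.sqrt (σ ^ 2 -
            ∫ y in {y : ℝ | κ * Real.sqrt t ≤ |y|}, y ^ 2 ∂ν))|) / t) < ⊤) :
    (∫⁻ t in Set.Ioi (1 : ℝ), ENNReal.ofReal
        ((⨆ x : ℝ, |(P {ω | X t ω / Real.sqrt t ≤ x}).toReal -
          stdGaussianCDF (x / σ)|) / t) < ⊤)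
      ↔ ∫⁻ t in Set.Ioi (1 : ℝ), ENNReal.ofReal
          ((σ - Real.sqrt (σ ^ 2 -
            ∫ x in {y : ℝ | κ * Real.sqrt t ≤ |y|}, x ^ 2 ∂ν)) / t) < ⊤ := by
  classical
  haveI hP : IsProbabilityMeasure P := hX.isProb
  have hκ0 : (0:ℝ) < κ := by linarith
  -- basic facts about the truncated variance
  have hmeasSet : ∀ c : ℝ, MeasurableSet {y : ℝ | c ≤ |y|} := fun c =>
    measurableSet_le measurable_const measurable_abs
  have hI_nonneg : ∀ t : ℝ, 0 ≤ ∫ x in {y : ℝ | κ * Real.sqrt t ≤ |y|}, x ^ 2 ∂ν :=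
    fun t => setIntegral_nonneg (hmeasSet _) fun x _ => sq_nonneg x
  have hσt_nonneg : ∀ t : ℝ,
      0 ≤ Real.sqrt (σ ^ 2 - ∫ x in {y : ℝ | κ * Real.sqrt t ≤ |y|}, x ^ 2 ∂ν) :=
    fun t => Real.sqrt_nonneg _
  have hσt_le : ∀ t : ℝ,
      Real.sqrt (σ ^ 2 - ∫ x in {y : ℝ | κ * Real.sqrt t ≤ |y|}, x ^ 2 ∂ν) ≤ σ := by
    intro t
    calc Real.sqrt (σ ^ 2 - ∫ x in {y : ℝ | κ * Real.sqrt t ≤ |y|}, x ^ 2 ∂ν)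
        ≤ Real.sqrt (σ ^ 2) := Real.sqrt_le_sqrt (by linarith [hI_nonneg t])
      _ = σ := by rw [Real.sqrt_sq hσpos.le]
  -- eventual closeness of σ_t to σ
  obtain ⟨T₀, hT₀⟩ : ∃ T₀ : ℝ, ∀ t ≥ T₀,
      σ/2 ≤ Real.sqrt (σ ^ 2 - ∫ x in {y : ℝ | κ * Real.sqrt t ≤ |y|}, x ^ 2 ∂ν) :=
    eventually_atTop.1 (hconv.eventually (eventually_ge_nhds (by linarith)))
  -- bounds on the distribution functions
  have hF01 : ∀ t x : ℝ, 0 ≤ (P {ω | X t ω / Real.sqrt t ≤ x}).toReal ∧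
      (P {ω | X t ω / Real.sqrt t ≤ x}).toReal ≤ 1 := by
    intro t x
    refine ⟨ENNReal.toReal_nonneg, ?_⟩
    have hle : P {ω | X t ω / Real.sqrt t ≤ x} ≤ 1 := prob_le_one
    exact ENNReal.toReal_le_of_le_ofReal zero_le_one (by simpa using hle)
  have hbddB : ∀ t : ℝ, BddAbove (Set.range fun x : ℝ =>
      |(P {ω | X t ω / Real.sqrt t ≤ x}).toReal - stdGaussianCDF (x / σ)|) := by
    intro t
    refine ⟨1, ?_⟩
    rintro _ ⟨x, rfl⟩
    exact abs_sub_le_one' (hF01 t x).1 (hF01 t x).2 (stdGaussianCDF_nonneg _)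
      (stdGaussianCDF_le_one _)
  have hbddA : ∀ t : ℝ, BddAbove (Set.range fun x : ℝ =>
      |(P {ω | X t ω / Real.sqrt t ≤ x}).toReal - stdGaussianCDF (x / Real.sqrt (σ ^ 2 -
        ∫ y in {y : ℝ | κ * Real.sqrt t ≤ |y|}, y ^ 2 ∂ν))|) := by
    intro t
    refine ⟨1, ?_⟩
    rintro _ ⟨x, rfl⟩
    exact abs_sub_le_one' (hF01 t x).1 (hF01 t x).2 (stdGaussianCDF_nonneg _)
      (stdGaussianCDF_le_one _)
  have hB0' : ∀ t : ℝ, 0 ≤ ⨆ x : ℝ, |(P {ω | X t ω / Real.sqrt t ≤ x}).toReal -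
      stdGaussianCDF (x / σ)| :=
    fun t => le_trans (abs_nonneg _) (le_ciSup (hbddB t) 0)
  have hB1' : ∀ t : ℝ, (⨆ x : ℝ, |(P {ω | X t ω / Real.sqrt t ≤ x}).toReal -
      stdGaussianCDF (x / σ)|) ≤ 1 :=
    fun t => ciSup_le fun x => abs_sub_le_one' (hF01 t x).1 (hF01 t x).2
      (stdGaussianCDF_nonneg _) (stdGaussianCDF_le_one _)
  -- case analysis on integrability of x^2 on the tail regions
  by_cases hint : ∀ t : ℝ, 1 < t →
      ¬ IntegrableOn (fun x => x ^ 2) {y : ℝ | κ * Real.sqrt t ≤ |y|} ν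
  · -- trivial case : all truncated variances equal σ
    have hI0 : ∀ t : ℝ, 1 < t →
        (∫ x in {y : ℝ | κ * Real.sqrt t ≤ |y|}, x ^ 2 ∂ν) = 0 := fun t ht =>
      integral_undef (hint t ht)
    have hσt_eq : ∀ t : ℝ, 1 < t →
        Real.sqrt (σ ^ 2 - ∫ x in {y : ℝ | κ * Real.sqrt t ≤ |y|}, x ^ 2 ∂ν) = σ := by
      intro t ht
      rw [hI0 t ht, sub_zero, Real.sqrt_sq hσpos.le]
    have hrhs : (∫⁻ t in Set.Ioi (1:ℝ), ENNReal.ofReal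
        ((σ - Real.sqrt (σ ^ 2 -
          ∫ x in {y : ℝ | κ * Real.sqrt t ≤ |y|}, x ^ 2 ∂ν)) / t)) = 0 := by
      rw [show (0:ℝ≥0∞) = ∫⁻ _ in Set.Ioi (1:ℝ), 0 by rw [lintegral_zero]]
      apply setLIntegral_congr_fun measurableSet_Ioi
      intro t ht
      beta_reduce
      rw [hσt_eq t ht, sub_self, zero_div, ENNReal.ofReal_zero]
    have hlhs : (∫⁻ t in Set.Ioi (1:ℝ), ENNReal.ofReal
        ((⨆ x : ℝ, |(P {ω | X t ω / Real.sqrt t ≤ x}).toReal -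
          stdGaussianCDF (x / σ)|) / t)) < ⊤ := by
      have heq : (∫⁻ t in Set.Ioi (1:ℝ), ENNReal.ofReal
          ((⨆ x : ℝ, |(P {ω | X t ω / Real.sqrt t ≤ x}).toReal -
            stdGaussianCDF (x / σ)|) / t))
          = ∫⁻ t in Set.Ioi (1:ℝ), ENNReal.ofReal
          ((⨆ x : ℝ, |(P {ω | X t ω / Real.sqrt t ≤ x}).toReal -
            stdGaussianCDF (x / Real.sqrt (σ ^ 2 -
              ∫ y in {y : ℝ | κ * Real.sqrt t ≤ |y|}, y ^ 2 ∂ν))|) / t) := by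
        apply setLIntegral_congr_fun measurableSet_Ioi
        intro t ht
        beta_reduce
        rw [hσt_eq t ht]
      rw [heq]
      exact hthm1
    constructor
    · intro _
      rw [hrhs]
      exact ENNReal.zero_lt_top
    · intro _
      exact hlhs
  · push_neg at hint
    obtain ⟨t₁, ht₁, hint₁⟩ := hint
    have hsub : ∀ u v : ℝ, u ≤ v →
        {y : ℝ | κ * Real.sqrt v ≤ |y|} ⊆ {y : ℝ | κ * Real.sqrt u ≤ |y|} := by
      intro u v huv y hy
      have h : κ * Real.sqrt u ≤ κ * Real.sqrt v :=
        mul_le_mul_of_nonneg_left (Real.sqrt_le_sqrt huv) hκ0.le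
      exact le_trans h hy
    have hIntOn : ∀ t, t₁ ≤ t →
        IntegrableOn (fun x => x ^ 2) {y : ℝ | κ * Real.sqrt t ≤ |y|} ν :=
      fun t ht => hint₁.mono_set (hsub t₁ t ht)
    have hImono : ∀ u v : ℝ, t₁ ≤ u → u ≤ v →
        (∫ x in {y : ℝ | κ * Real.sqrt v ≤ |y|}, x ^ 2 ∂ν)
          ≤ ∫ x in {y : ℝ | κ * Real.sqrt u ≤ |y|}, x ^ 2 ∂ν := by
      intro u v hu huv
      apply setIntegral_mono_set (hIntOn u hu)
      · exact Eventually.of_forall fun x => sq_nonneg x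
      · exact HasSubset.Subset.eventuallyLE (hsub u v huv)
    set T : ℝ := max (max T₀ t₁) 2 with hT_def
    have hTT₀ : T₀ ≤ T := le_trans (le_max_left _ _) (le_max_left _ _)
    have hTt₁ : t₁ ≤ T := le_trans (le_max_right _ _) (le_max_left _ _)
    have hT2 : (2:ℝ) ≤ T := le_max_right _ _
    -- measurable version of C
    have hCm_anti : Antitone (fun u : ℝ => σ - Real.sqrt (σ ^ 2 -
        ∫ x in {y : ℝ | κ * Real.sqrt (max u T) ≤ |y|}, x ^ 2 ∂ν)) := by
      intro u v huv
      simp only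
      have h1 : (∫ x in {y : ℝ | κ * Real.sqrt (max v T) ≤ |y|}, x ^ 2 ∂ν)
          ≤ ∫ x in {y : ℝ | κ * Real.sqrt (max u T) ≤ |y|}, x ^ 2 ∂ν :=
        hImono _ _ (le_trans hTt₁ (le_max_right _ _)) (max_le_max huv le_rfl)
      have h2 := Real.sqrt_le_sqrt (by linarith :
        σ ^ 2 - (∫ x in {y : ℝ | κ * Real.sqrt (max u T) ≤ |y|}, x ^ 2 ∂ν)
          ≤ σ ^ 2 - ∫ x in {y : ℝ | κ * Real.sqrt (max v T) ≤ |y|}, x ^ 2 ∂ν)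
      linarith
    have hCm_meas := hCm_anti.measurable
    have hCm_eq : ∀ t ∈ Ioi T, (fun u : ℝ => σ - Real.sqrt (σ ^ 2 -
        ∫ x in {y : ℝ | κ * Real.sqrt (max u T) ≤ |y|}, x ^ 2 ∂ν)) t
        = σ - Real.sqrt (σ ^ 2 - ∫ x in {y : ℝ | κ * Real.sqrt t ≤ |y|}, x ^ 2 ∂ν) := by
      intro t ht
      simp only [max_eq_left (le_of_lt (Set.mem_Ioi.1 ht))]
    -- measurable version of B
    have hZmeas : Measurable fun p : ℝ × Ω => X (max p.1 1) p.2 :=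
      measurable_levy_joint X hX.meas hX.rightCont
    have hBm_meas : Measurable (fun t : ℝ => ⨆ q : ℚ,
        |(P {ω | X (max t 1) ω ≤ (q:ℝ) * Real.sqrt (max t 1)}).toReal
          - stdGaussianCDF ((q:ℝ) / σ)|) := by
      apply Measurable.iSup
      intro q
      have h1 : Measurable fun t : ℝ =>
          (P {ω | X (max t 1) ω ≤ (q:ℝ) * Real.sqrt (max t 1)}).toReal :=
        measurable_cdf_t P hZmeas (q:ℝ)
      exact (h1.sub measurable_const).abs
    have hBm_eq : ∀ t ∈ Ioi (1:ℝ), (⨆ q : ℚ,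
        |(P {ω | X (max t 1) ω ≤ (q:ℝ) * Real.sqrt (max t 1)}).toReal
          - stdGaussianCDF ((q:ℝ) / σ)|)
        = ⨆ x : ℝ, |(P {ω | X t ω / Real.sqrt t ≤ x}).toReal - stdGaussianCDF (x / σ)| := by
      intro t ht
      have ht1 : (1:ℝ) ≤ t := le_of_lt ht
      have hmax : max t 1 = t := max_eq_left ht1
      have hsq : 0 < Real.sqrt t := Real.sqrt_pos.2 (by linarith [ht.out])
      have hsets : ∀ x : ℝ, {ω | X (max t 1) ω ≤ x * Real.sqrt (max t 1)}
          = {ω | X t ω / Real.sqrt t ≤ x} := by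
        intro x
        rw [hmax]
        ext ω
        simp only [Set.mem_setOf_eq]
        rw [div_le_iff₀ hsq]
      set Y : Ω → ℝ := fun ω => X t ω / Real.sqrt t with hY_def
      have hY : Measurable Y := (hX.meas t).div_const _
      haveI : IsProbabilityMeasure (P.map Y) := Measure.isProbabilityMeasure_map hY.aemeasurable
      have hFeq : ∀ x : ℝ, (P {ω | X t ω / Real.sqrt t ≤ x}).toReal = cdf (P.map Y) x := by
        intro x
        rw [cdf_eq_real, measureReal_def, Measure.map_apply hY measurableSet_Iic]
        rfl
      have h1b : ∀ y : ℝ, |cdf (P.map Y) y - stdGaussianCDF (y / σ)| ≤ 1 := by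
        intro y
        exact abs_sub_le_one' (cdf_nonneg _ _) (cdf_le_one _ _)
          (stdGaussianCDF_nonneg _) (stdGaussianCDF_le_one _)
      have hrc : ∀ x : ℝ, ContinuousWithinAt
          (fun y => |cdf (P.map Y) y - stdGaussianCDF (y / σ)|) (Ici x) x := by
        intro x
        apply ContinuousWithinAt.abs
        apply ContinuousWithinAt.sub
        · exact (cdf (P.map Y)).right_continuous x
        · exact (stdGaussianCDF_continuous.comp (continuous_id.div_const σ)).continuousWithinAt
      calc (⨆ q : ℚ, |(P {ω | X (max t 1) ω ≤ (q:ℝ) * Real.sqrt (max t 1)}).toReal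
          - stdGaussianCDF ((q:ℝ) / σ)|)
          = ⨆ q : ℚ, |cdf (P.map Y) (q:ℝ) - stdGaussianCDF ((q:ℝ) / σ)| := by
            congr 1
            funext q
            rw [hsets, hFeq]
        _ = ⨆ x : ℝ, |cdf (P.map Y) x - stdGaussianCDF (x / σ)| :=
            (ciSup_rat_of_rightCont h1b hrc).symm
        _ = ⨆ x : ℝ, |(P {ω | X t ω / Real.sqrt t ≤ x}).toReal - stdGaussianCDF (x / σ)| := by
            congr 1
            funext x
            rw [hFeq]
    -- pointwise comparisons on the tail
    have hs_half : ∀ t ∈ Ioi T,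
        σ/2 ≤ Real.sqrt (σ ^ 2 - ∫ x in {y : ℝ | κ * Real.sqrt t ≤ |y|}, x ^ 2 ∂ν) :=
      fun t ht => hT₀ t (le_of_lt (lt_of_le_of_lt hTT₀ ht))
    have hAB : ∀ t ∈ Ioi T,
        (⨆ x : ℝ, |(P {ω | X t ω / Real.sqrt t ≤ x}).toReal - stdGaussianCDF (x / σ)|)
        ≤ (⨆ x : ℝ, |(P {ω | X t ω / Real.sqrt t ≤ x}).toReal - stdGaussianCDF (x /
            Real.sqrt (σ ^ 2 - ∫ y in {y : ℝ | κ * Real.sqrt t ≤ |y|}, y ^ 2 ∂ν))|)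
          + σ⁻¹ * (σ - Real.sqrt (σ ^ 2 -
              ∫ x in {y : ℝ | κ * Real.sqrt t ≤ |y|}, x ^ 2 ∂ν)) := by
      intro t ht
      apply ciSup_le
      intro x
      calc |(P {ω | X t ω / Real.sqrt t ≤ x}).toReal - stdGaussianCDF (x / σ)|
          ≤ |(P {ω | X t ω / Real.sqrt t ≤ x}).toReal - stdGaussianCDF (x /
              Real.sqrt (σ ^ 2 - ∫ y in {y : ℝ | κ * Real.sqrt t ≤ |y|}, y ^ 2 ∂ν))|
            + |stdGaussianCDF (x / Real.sqrt (σ ^ 2 -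
                ∫ y in {y : ℝ | κ * Real.sqrt t ≤ |y|}, y ^ 2 ∂ν)) - stdGaussianCDF (x / σ)| :=
            abs_sub_le _ _ _
        _ ≤ _ := by
            apply add_le_add (le_ciSup (hbddA t) x)
            rw [← div_eq_inv_mul]
            exact gauss_upper (σ := σ) (s := Real.sqrt (σ ^ 2 -
              ∫ y in {y : ℝ | κ * Real.sqrt t ≤ |y|}, y ^ 2 ∂ν)) x hσpos
              (hs_half t ht) (hσt_le t)
    have hBA : ∀ t ∈ Ioi T,
        (gaussianPDFReal 0 1 2 / σ) * (σ - Real.sqrt (σ ^ 2 -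
            ∫ x in {y : ℝ | κ * Real.sqrt t ≤ |y|}, x ^ 2 ∂ν))
        ≤ (⨆ x : ℝ, |(P {ω | X t ω / Real.sqrt t ≤ x}).toReal - stdGaussianCDF (x /
            Real.sqrt (σ ^ 2 - ∫ y in {y : ℝ | κ * Real.sqrt t ≤ |y|}, y ^ 2 ∂ν))|)
          + ⨆ x : ℝ, |(P {ω | X t ω / Real.sqrt t ≤ x}).toReal - stdGaussianCDF (x / σ)| := by
      intro t ht
      set s : ℝ := Real.sqrt (σ ^ 2 - ∫ x in {y : ℝ | κ * Real.sqrt t ≤ |y|}, x ^ 2 ∂ν) with hs_def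
      have hlow := gauss_lower hσpos (hs_half t ht) (hσt_le t)
      have h2 : |stdGaussianCDF (σ / s) - (P {ω | X t ω / Real.sqrt t ≤ σ}).toReal|
          ≤ ⨆ x : ℝ, |(P {ω | X t ω / Real.sqrt t ≤ x}).toReal - stdGaussianCDF (x /
            Real.sqrt (σ ^ 2 - ∫ y in {y : ℝ | κ * Real.sqrt t ≤ |y|}, y ^ 2 ∂ν))| := by
        rw [abs_sub_comm]
        exact le_ciSup (hbddA t) σ
      have h3 : |(P {ω | X t ω / Real.sqrt t ≤ σ}).toReal - stdGaussianCDF 1|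
          ≤ ⨆ x : ℝ, |(P {ω | X t ω / Real.sqrt t ≤ x}).toReal - stdGaussianCDF (x / σ)| := by
        have h4 := le_ciSup (hbddB t) σ
        rwa [div_self hσpos.ne'] at h4
      have h1 : stdGaussianCDF (σ / s) - stdGaussianCDF 1
          ≤ |stdGaussianCDF (σ / s) - (P {ω | X t ω / Real.sqrt t ≤ σ}).toReal|
            + |(P {ω | X t ω / Real.sqrt t ≤ σ}).toReal - stdGaussianCDF 1| :=
        le_trans (le_abs_self _) (abs_sub_le _ _ _)
      have h5 : (gaussianPDFReal 0 1 2 / σ) * (σ - s)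
          = (σ - s) * (gaussianPDFReal 0 1 2 / σ) := mul_comm _ _
      rw [h5]
      linarith
    have k1pos : 0 < gaussianPDFReal 0 1 2 / σ :=
      div_pos (gaussianPDFReal_pos _ _ 2 one_ne_zero) hσpos
    exact aux_iff hT2 hσpos.le k1pos (inv_nonneg.2 hσpos.le)
      (fun t _ => hB0' t) (fun t _ => hB1' t)
      (fun t _ => by linarith [hσt_le t])
      (fun t _ => by linarith [hσt_nonneg t])
      hBm_meas hBm_eq hCm_meas hCm_eq hAB hBA hthm1

end
end
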